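/- Let W and G be independent exponential random variables with rate 1, and let α > 2 and c > 0. Then ∫₀^∞ P[x ≤ (cG/W)^{2/α}] dx = c^{2/α} / sinc(2/α), where sinc(y) = sin(πy)/(πy). -/

import Mathlib

/-! By the layer-cake formula the integral is `E[(cG/W)^s]` with `s = 2/α ∈ (0,1)`. Independence
factorises it as `c^s E[G^s] E[W^(-s)] = c^s Γ(1+s) Γ(1-s)`, and Euler's reflection formula turns
`Γ(1+s) Γ(1-s) = s Γ(s) Γ(1-s)` into `π s / sin (π s)`. -/

open MeasureTheory ProbabilityTheory Real Set

lemma expMeasure_one_eq_withDensity :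
    expMeasure 1 = (volume.restrict (Ioi 0)).withDensity fun x => ENNReal.ofReal (exp (-x)) := by
  rw [← withDensity_indicator measurableSet_Ioi]
  refine withDensity_congr_ae ?_
  filter_upwards [compl_mem_ae_iff.mpr (measure_singleton (0 : ℝ))] with x (hx : x ≠ 0)
  change exponentialPDF 1 x = _
  rcases hx.lt_or_gt with hx | hx
  · simp [exponentialPDF_of_neg hx, hx.not_gt]
  · simp [exponentialPDF_of_nonneg hx.le, hx]

lemma ae_pos_expMeasure_one : ∀ᵐ x ∂expMeasure 1, 0 < x := by
  rw [expMeasure_one_eq_withDensity]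
  exact (withDensity_absolutelyContinuous _ _).ae_le (ae_restrict_mem measurableSet_Ioi)

lemma integral_expMeasure_one (g : ℝ → ℝ) :
    ∫ x, g x ∂expMeasure 1 = ∫ x in Ioi 0, exp (-x) * g x := by
  rw [expMeasure_one_eq_withDensity, integral_withDensity_eq_integral_toReal_smul (by fun_prop)
    (ae_of_all _ fun _ => ENNReal.ofReal_lt_top)]
  simp only [ENNReal.toReal_ofReal (exp_nonneg _), smul_eq_mul]

lemma integrable_expMeasure_one_iff {g : ℝ → ℝ} :
    Integrable g (expMeasure 1) ↔ IntegrableOn (fun x => exp (-x) * g x) (Ioi 0) := by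
  rw [expMeasure_one_eq_withDensity, integrable_withDensity_iff_integrable_smul' (by fun_prop)
    (ae_of_all _ fun _ => ENNReal.ofReal_lt_top)]
  simp only [ENNReal.toReal_ofReal (exp_nonneg _), smul_eq_mul, IntegrableOn]

lemma integrable_rpow_expMeasure_one {t : ℝ} (ht : -1 < t) :
    Integrable (fun x => x ^ t) (expMeasure 1) := by
  simpa [integrable_expMeasure_one_iff] using GammaIntegral_convergent (s := t + 1) (by linarith)

lemma integral_rpow_expMeasure_one {t : ℝ} (ht : -1 < t) :
    ∫ x, x ^ t ∂expMeasure 1 = Gamma (t + 1) := by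
  simp [integral_expMeasure_one, Gamma_eq_integral (s := t + 1) (by linarith)]

lemma Gamma_one_add_mul_Gamma_one_sub {s : ℝ} (hs : s ≠ 0) :
    Gamma (1 + s) * Gamma (1 - s) = π * s / sin (π * s) := by
  rw [add_comm, Gamma_add_one hs, mul_assoc, Gamma_mul_Gamma_one_sub]
  ring

section ExponentialRandomVariable

variable {Ω : Type*} [MeasurableSpace Ω] {μ : Measure Ω}

lemma ae_pos_of_map_eq_expMeasure_one {X : Ω → ℝ} (hX : AEMeasurable X μ)
    (hlaw : μ.map X = expMeasure 1) : ∀ᵐ ω ∂μ, 0 < X ω :=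
  ae_of_ae_map hX (hlaw ▸ ae_pos_expMeasure_one)

lemma integrable_rpow_of_map_eq_expMeasure_one {X : Ω → ℝ} (hX : AEMeasurable X μ)
    (hlaw : μ.map X = expMeasure 1) {t : ℝ} (ht : -1 < t) :
    Integrable (fun ω => X ω ^ t) μ :=
  (integrable_map_measure (g := fun x => x ^ t) (by fun_prop) hX).mp
    (hlaw ▸ integrable_rpow_expMeasure_one ht)

lemma integral_rpow_of_map_eq_expMeasure_one {X : Ω → ℝ} (hX : AEMeasurable X μ)
    (hlaw : μ.map X = expMeasure 1) {t : ℝ} (ht : -1 < t) :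
    ∫ ω, X ω ^ t ∂μ = Gamma (t + 1) := by
  rw [← integral_rpow_expMeasure_one ht, ← hlaw, integral_map hX (by fun_prop)]

variable {W G : Ω → ℝ} (hW : AEMeasurable W μ) (hG : AEMeasurable G μ)
  (hWlaw : μ.map W = expMeasure 1) (hGlaw : μ.map G = expMeasure 1)
include hW hG hWlaw hGlaw

lemma rpow_div_ae_eq_of_map_eq_expMeasure_one (s : ℝ) :
    (fun ω => (G ω / W ω) ^ s) =ᵐ[μ] fun ω => G ω ^ s * W ω ^ (-s) := by
  filter_upwards [ae_pos_of_map_eq_expMeasure_one hW hWlaw,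
    ae_pos_of_map_eq_expMeasure_one hG hGlaw] with ω hWω hGω
  rw [div_rpow hGω.le hWω.le, rpow_neg hWω.le, div_eq_mul_inv]

lemma integrable_rpow_div_of_indepFun (hindep : IndepFun W G μ) {s : ℝ} (hs₀ : -1 < s)
    (hs₁ : s < 1) : Integrable (fun ω => (G ω / W ω) ^ s) μ := by
  refine Integrable.congr ?_ (rpow_div_ae_eq_of_map_eq_expMeasure_one hW hG hWlaw hGlaw s).symm
  exact (hindep.symm.comp (measurable_id.pow_const s) (measurable_id.pow_const (-s))).integrable_mul
    (integrable_rpow_of_map_eq_expMeasure_one hG hGlaw hs₀)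
    (integrable_rpow_of_map_eq_expMeasure_one hW hWlaw (by linarith))

lemma integral_rpow_div_of_indepFun (hindep : IndepFun W G μ) {s : ℝ} (hs₀ : -1 < s)
    (hs₁ : s < 1) : ∫ ω, (G ω / W ω) ^ s ∂μ = Gamma (1 + s) * Gamma (1 - s) := by
  rw [integral_congr_ae (rpow_div_ae_eq_of_map_eq_expMeasure_one hW hG hWlaw hGlaw s),
    add_comm, ← integral_rpow_of_map_eq_expMeasure_one hG hGlaw hs₀, sub_eq_neg_add,
    ← integral_rpow_of_map_eq_expMeasure_one hW hWlaw (by linarith : -1 < -s)]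
  exact hindep.symm.integral_comp_mul_comp hG hW (f := fun x => x ^ s) (g := fun x => x ^ (-s))
    (by fun_prop) (by fun_prop)

end ExponentialRandomVariable

theorem integral_ccdf_ratio_exp_rpow_general
    {Ω : Type*} [MeasureSpace Ω] (μ : Measure Ω)
    (W G : Ω → ℝ) (hW : Measurable W) (hG : Measurable G)
    (hWlaw : μ.map W = expMeasure 1) (hGlaw : μ.map G = expMeasure 1)
    (hindep : IndepFun W G μ)
    (α c : ℝ) (hα : 2 < α) (hc : 0 < c) :
    ∫ x in Ioi (0 : ℝ), (μ {ω | x ≤ (c * G ω / W ω) ^ (2 / α)}).toReal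
      = c ^ (2 / α) / (Real.sin (π * (2 / α)) / (π * (2 / α))) := by
  set s := 2 / α
  have hs₀ : 0 < s := by positivity
  have hs₁ : s < 1 := (div_lt_one (by linarith)).mpr hα
  have hWpos := ae_pos_of_map_eq_expMeasure_one hW.aemeasurable hWlaw
  have hGpos := ae_pos_of_map_eq_expMeasure_one hG.aemeasurable hGlaw
  have hY : (fun ω => (c * G ω / W ω) ^ s) =ᵐ[μ] fun ω => c ^ s * (G ω / W ω) ^ s := by
    filter_upwards [hWpos, hGpos] with ω hWω hGω
    rw [mul_div_assoc, mul_rpow hc.le (div_pos hGω hWω).le]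
  have hYint : Integrable (fun ω => (c * G ω / W ω) ^ s) μ :=
    ((integrable_rpow_div_of_indepFun hW.aemeasurable hG.aemeasurable hWlaw hGlaw hindep
      (by linarith) hs₁).const_mul _).congr hY.symm
  have hYnonneg : 0 ≤ᵐ[μ] fun ω => (c * G ω / W ω) ^ s := by
    filter_upwards [hWpos, hGpos] with ω hWω hGω
    positivity
  refine (hYint.integral_eq_integral_meas_le hYnonneg).symm.trans ?_
  rw [integral_congr_ae hY, integral_const_mul,
    integral_rpow_div_of_indepFun hW.aemeasurable hG.aemeasurable hWlaw hGlaw hindep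
      (by linarith) hs₁,
    Gamma_one_add_mul_Gamma_one_sub hs₀.ne', div_div_eq_mul_div, ← mul_div_assoc]

/-- If `W` and `G` are independent `Exp(1)` random variables, `α > 2` and
`c > 0`, then `∫₀^∞ P[x ≤ (cG/W)^(2/α)] dx = c^(2/α) / sinc(2/α)` where
`sinc y = sin (π y) / (π y)`. -/
theorem integral_ccdf_ratio_exp_rpow
    {Ω : Type*} [MeasureSpace Ω] (μ : Measure Ω) [IsProbabilityMeasure μ]
    (W G : Ω → ℝ) (hW : Measurable W) (hG : Measurable G)
    (hWlaw : μ.map W = expMeasure 1) (hGlaw : μ.map G = expMeasure 1)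
    (hindep : IndepFun W G μ)
    (α c : ℝ) (hα : 2 < α) (hc : 0 < c) :
    ∫ x in Ioi (0 : ℝ), (μ {ω | x ≤ (c * G ω / W ω) ^ (2 / α)}).toReal
      = c ^ (2 / α) / (Real.sin (π * (2 / α)) / (π * (2 / α))) :=
  integral_ccdf_ratio_exp_rpow_general μ W G hW hG hWlaw hGlaw hindep α c hα hc
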